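/- arXiv:0902.0908 — 2 statements merged into one kernel-verified Lean document; each statement's English description precedes it below -/
import Mathlib

section
/- There exists an infinite directed graph G of bounded geometry (every vertex has out-degree 1 or 2) with a root i₀ such that its directed cover T satisfies liminf_{n→∞} |T_n|^{1/n} ≤ 2^{1/2} and limsup_{n→∞} |T_n|^{1/n} ≥ 2^{3/4}; in particular, the growth rate lim_{n→∞} |T_n|^{1/n} of a directed cover of an infinite graph need not exist. -/
open Filter Topology MeasureTheory Set
open scoped ENNReal NNReal Classical

/-- Vertices of the directed cover of the directed graph `(V, E)` rooted at `i₀`: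
finite directed paths in `G` starting at `i₀`. -/
def Cover (V : Type) (E : V → V → Prop) (i₀ : V) : Type :=
  {l : List V // List.Chain E i₀ l}

namespace Cover

variable {V : Type} {E : V → V → Prop} {i₀ : V}

instance : MeasurableSpace (Cover V E i₀) := ⊤

/-- The root of the directed cover: the trivial path. -/
def root : Cover V E i₀ := ⟨[], List.Chain.nil⟩

/-- The label of a cover vertex: the endpoint of the corresponding path in `G`. -/
def lbl (x : Cover V E i₀) : V := x.val.getLastD i₀

/-- The height of a cover vertex: the graph distance in the tree from the root. -/
def ht (x : Cover V E i₀) : ℕ := x.val.length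

/-- `y.IsChildOf x` holds iff `y` is a direct descendant (successor) of `x` in the tree. -/
def IsChildOf (y x : Cover V E i₀) : Prop := ∃ j : V, y.val = x.val ++ [j]

end Cover

/-- One-step transition probabilities of the nearest-neighbour random walk on the
directed cover, with forward probabilities `pf` (on labels), backward probabilities `pm`
and a loop at the root. -/
noncomputable def coverP {V : Type} (E : V → V → Prop) (i₀ : V)
    (pf : V → V → ℝ) (pm : V → ℝ) (x y : Cover V E i₀) : ℝ :=
  if Cover.IsChildOf y x then pf x.lbl y.lbl
  else if x.val = [] ∧ y.val = [] then pm i₀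
  else if Cover.IsChildOf x y then pm x.lbl
  else 0

/-- `n`-step transition probabilities of the Markov chain with one-step kernel `p`. -/
noncomputable def kpow {S : Type} (p : S → S → ℝ) : ℕ → S → S → ℝ
  | 0 => fun x y => if x = y then 1 else 0
  | n + 1 => fun x y => ∑' z : S, p x z * kpow p n z y

/-- Taboo probabilities: `taboo p w n x y` is the probability that the Markov chain with
one-step kernel `p` started at `x` is at `y` at time `n`, avoiding `w` at all times `m < n`. -/
noncomputable def taboo {S : Type} (p : S → S → ℝ) (w : S) : ℕ → S → S → ℝ
  | 0 => fun x y => if x = y then 1 else 0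
  | n + 1 => fun x y => if x = w then 0 else ∑' z : S, p x z * taboo p w n z y

/-- The probability that the Markov chain with kernel `p` started at `o` returns to `o`
(the sum over `n` of the probabilities of a first return at time `n + 1`). -/
noncomputable def returnProbA {S : Type} (p : S → S → ℝ) (o : S) : ℝ≥0∞ :=
  ∑' n : ℕ, ENNReal.ofReal (∑' z : S, p o z * taboo p o n z o)

/-- The upper Collatz–Wielandt number `λ⁺(M)` of a nonnegative matrix `M`. -/
noncomputable def lambdaPlus {V : Type} (M : V → V → ℝ) : ℝ :=
  sSup {lam : ℝ | 0 < lam ∧ ∃ f : V → ℝ, (∀ i, 0 ≤ f i) ∧ f ≠ 0 ∧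
    BddAbove (Set.range f) ∧ ∀ i, lam * f i ≤ ∑' j : V, M i j * f j}

/-- The `ℓ∞`-spectral radius `r∞(M) = lim_n ‖Mⁿ‖_∞^(1/n)` of a nonnegative matrix `M`
(the limit exists; it is expressed via `limsup`). -/
noncomputable def rInfty {V : Type} (M : V → V → ℝ) : ℝ :=
  Filter.limsup (fun n : ℕ => (⨆ i : V, ∑' j : V, kpow M n i j) ^ ((n : ℝ)⁻¹)) Filter.atTop

/-- `(Ω, P, X)` is a realization of the nearest-neighbour random walk on the directed cover
started at the root: the finite-dimensional distributions are the Markovian ones given by the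
kernel `coverP E i₀ pf pm` and starting point `Cover.root`. -/
def IsCoverWalk {V : Type} (E : V → V → Prop) (i₀ : V) (pf : V → V → ℝ) (pm : V → ℝ)
    {Ω : Type} [MeasurableSpace Ω] (P : Measure Ω) (X : ℕ → Ω → Cover V E i₀) : Prop :=
  (∀ n, Measurable (X n)) ∧
  ∀ (n : ℕ) (path : ℕ → Cover V E i₀),
    P {ω | ∀ k ≤ n, X k ω = path k} =
      (if path 0 = Cover.root then 1 else 0) *
        ∏ k ∈ Finset.range n, ENNReal.ofReal (coverP E i₀ pf pm (path k) (path (k + 1)))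

/-- The length of a path (given by its list of labels, with previous vertex `prev`)
with respect to the weight function `w` on the edges of `G`. -/
noncomputable def pathLen {V : Type} (w : V → V → ℝ) : V → List V → ℝ
  | _, [] => 0
  | prev, j :: rest => w prev j + pathLen w j rest

/-!
Take vertices `(k, b) ∈ ℕ × Bool` at level `k`, with an edge from level `k` to `(k + 1, false)`
and, when `k` is a branching level, also to `(k + 1, true)`. A path of length `n` from `(0, false)`
is then a free choice of a bit at each branching level below `n`, so `|T_n| = 2 ^ c(n)` with `c(n)`
the number of branching levels below `n`. Declaring `k` branching when `⌊log₄ k⌋` is even, the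
block `[4 ^ e, 4 ^ (e + 1))` makes up three quarters of `[0, 4 ^ (e + 1))`, so `c(n) / n` is at
least `3 / 4` at `n = 4 ^ (2m + 1)` and at most `1 / 4` at `n = 4 ^ (2m + 2)`.
-/

open scoped Finset

section BranchingGraph

variable (B : ℕ → Prop)

def branchingGraph (x y : ℕ × Bool) : Prop := y.1 = x.1 + 1 ∧ (y.2 = true → B x.1)

theorem branchingGraph_outdegree (x : ℕ × Bool) :
    {y | branchingGraph B x y}.Finite ∧ 1 ≤ {y | branchingGraph B x y}.ncard ∧
      {y | branchingGraph B x y}.ncard ≤ 2 := by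
  have hsub : {y | branchingGraph B x y} ⊆ {(x.1 + 1, false), (x.1 + 1, true)} := by
    rintro ⟨k, b⟩ ⟨rfl, -⟩
    cases b <;> simp
  have hfin : {y | branchingGraph B x y}.Finite := (toFinite _).subset hsub
  refine ⟨hfin, ?_, ?_⟩
  · exact (ncard_pos hfin).mpr ⟨(x.1 + 1, false), rfl, by simp⟩
  · exact (ncard_le_ncard hsub).trans ((ncard_insert_le _ _).trans (by simp))

variable {B}

theorem isChain_cons_branchingGraph_iff (l : List (ℕ × Bool)) (k : ℕ) (b : Bool) :
    List.IsChain (branchingGraph B) ((k, b) :: l) ↔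
      ∀ i (h : i < l.length), l[i].1 = k + i + 1 ∧ (l[i].2 = true → B (k + i)) := by
  induction l generalizing k b with
  | nil => simp
  | cons a l ih =>
    obtain ⟨a₁, a₂⟩ := a
    rw [List.isChain_cons_cons, ih, branchingGraph]
    constructor
    · rintro ⟨⟨rfl, h₀⟩, hl⟩ (_ | i) hi
      · simpa using h₀
      · simpa [Nat.add_right_comm, Nat.add_assoc, Nat.add_comm 1] using hl i (by simpa using hi)
    · intro h
      have h₀ := h 0 (by simp)
      simp only [List.getElem_cons_zero, Nat.add_zero] at h₀
      obtain ⟨rfl, hb⟩ := h₀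
      refine ⟨⟨rfl, hb⟩, fun i hi => ?_⟩
      have hsucc := h (i + 1) (by simpa using hi)
      simpa [Nat.add_right_comm, Nat.add_assoc, Nat.add_comm 1] using hsucc

def branchingGraphCoverLevelEquiv (n : ℕ) :
    {x : Cover (ℕ × Bool) (branchingGraph B) (0, false) | x.ht = n} ≃
      ((i : Fin n) → {b : Bool // b = true → B i}) where
  toFun x i :=
    have hi : i.1 < x.1.1.length := i.2.trans_eq x.2.symm
    ⟨x.1.1[i.1].2, by simpa using ((isChain_cons_branchingGraph_iff _ 0 false).mp x.1.2 i hi).2⟩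
  invFun s :=
    ⟨⟨List.ofFn fun i => ((i : ℕ) + 1, (s i).1),
      (isChain_cons_branchingGraph_iff _ 0 false).mpr fun i hi => by
        simpa using (s ⟨i, by simpa using hi⟩).2⟩,
      List.length_ofFn⟩
  left_inv x := by
    have hlen : x.1.1.length = n := x.2
    refine Subtype.ext <| Subtype.ext <|
      List.ext_getElem (by simpa using hlen.symm) fun i h₁ h₂ => ?_
    have := ((isChain_cons_branchingGraph_iff _ 0 false).mp x.1.2 i h₂).1
    ext <;> simp_all
  right_inv s := by
    ext i
    simp

theorem ncard_branchingGraph_coverLevel (n : ℕ) :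
    {x : Cover (ℕ × Bool) (branchingGraph B) (0, false) | x.ht = n}.ncard =
      2 ^ #{k ∈ Finset.range n | B k} := by
  have hfactor (p : Prop) : Nat.card {b : Bool // b = true → p} = if p then 2 else 1 := by
    by_cases hp : p <;> simp [hp, Nat.card_eq_fintype_card]
  rw [← Nat.card_coe_set_eq, Nat.card_congr (branchingGraphCoverLevelEquiv n), Nat.card_pi]
  simp only [hfactor]
  rw [Fin.prod_univ_eq_prod_range (fun k => if B k then 2 else 1), Finset.prod_ite]
  simp

end BranchingGraph

theorem natCast_two_pow_rpow_inv (c n : ℕ) :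
    ((2 ^ c : ℕ) : ℝ) ^ ((n : ℝ)⁻¹) = 2 ^ ((c : ℝ) / n) := by
  rw [Nat.cast_pow, Nat.cast_ofNat, ← Real.rpow_natCast, ← Real.rpow_mul zero_le_two,
    div_eq_mul_inv]

theorem liminf_two_pow_rpow_inv_le {c : ℕ → ℕ} {α : ℝ}
    (h : ∃ᶠ n in atTop, (c n : ℝ) ≤ α * n) :
    liminf (fun n : ℕ => ((2 ^ c n : ℕ) : ℝ) ^ ((n : ℝ)⁻¹)) atTop ≤ 2 ^ α := by
  simp only [natCast_two_pow_rpow_inv]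
  refine liminf_le_of_frequently_le ?_ (isBoundedUnder_of ⟨1, fun n => ?_⟩)
  · refine (h.and_eventually (eventually_gt_atTop 0)).mono fun n ⟨hn, hpos⟩ => ?_
    have hpos : (0 : ℝ) < n := Nat.cast_pos.mpr hpos
    exact Real.rpow_le_rpow_of_exponent_le one_le_two ((div_le_iff₀ hpos).mpr hn)
  · exact Real.one_le_rpow one_le_two (by positivity)

theorem le_limsup_two_pow_rpow_inv {c : ℕ → ℕ} {α : ℝ} (hc : ∀ n, c n ≤ n)
    (h : ∃ᶠ n in atTop, α * n ≤ c n) :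
    2 ^ α ≤ limsup (fun n : ℕ => ((2 ^ c n : ℕ) : ℝ) ^ ((n : ℝ)⁻¹)) atTop := by
  simp only [natCast_two_pow_rpow_inv]
  refine le_limsup_of_frequently_le ?_ (isBoundedUnder_of ⟨2, fun n => ?_⟩)
  · refine (h.and_eventually (eventually_gt_atTop 0)).mono fun n ⟨hn, hpos⟩ => ?_
    have hpos : (0 : ℝ) < n := Nat.cast_pos.mpr hpos
    exact Real.rpow_le_rpow_of_exponent_le one_le_two ((le_div_iff₀ hpos).mpr hn)
  · calc (2 : ℝ) ^ ((c n : ℝ) / n) ≤ 2 ^ (1 : ℝ) :=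
          Real.rpow_le_rpow_of_exponent_le one_le_two
            (div_le_one_of_le₀ (mod_cast hc n) n.cast_nonneg)
      _ = 2 := Real.rpow_one 2

theorem card_filter_range_le_of_forall_Ico_not {p : ℕ → Prop} {a b : ℕ}
    (h : ∀ k ∈ Finset.Ico a b, ¬ p k) : #{k ∈ Finset.range b | p k} ≤ a := by
  refine (Finset.card_le_card fun k hk => ?_).trans (Finset.card_range a).le
  simp only [Finset.mem_filter, Finset.mem_range, Finset.mem_Ico] at hk h ⊢
  by_contra! hak
  exact h k ⟨hak, hk.1⟩ hk.2

theorem le_card_filter_range_of_forall_Ico {p : ℕ → Prop} {a b : ℕ}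
    (h : ∀ k ∈ Finset.Ico a b, p k) : b - a ≤ #{k ∈ Finset.range b | p k} := by
  rw [← Nat.card_Ico]
  refine Finset.card_le_card fun k hk => ?_
  simp only [Finset.mem_filter, Finset.mem_range]
  exact ⟨(Finset.mem_Ico.mp hk).2, h k hk⟩

def IsBranchLevel (k : ℕ) : Prop := Even (Nat.log 4 k)

theorem log_four_eq_of_mem_Ico {e k : ℕ} (hk : k ∈ Finset.Ico (4 ^ e) (4 ^ (e + 1))) :
    Nat.log 4 k = e :=
  Nat.log_eq_of_pow_le_of_lt_pow (Finset.mem_Ico.mp hk).1 (Finset.mem_Ico.mp hk).2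

theorem tendsto_four_pow_two_mul_add_atTop (j : ℕ) :
    Tendsto (fun m : ℕ => 4 ^ (2 * m + j)) atTop atTop :=
  tendsto_atTop_mono
    (fun m => show m ≤ _ by have := Nat.lt_pow_self (n := 2 * m + j) (by norm_num : 1 < 4); omega)
    tendsto_id

theorem frequently_card_branchLevels_le :
    ∃ᶠ n in atTop, (#{k ∈ Finset.range n | IsBranchLevel k} : ℝ) ≤ 1 / 4 * n := by
  refine (tendsto_four_pow_two_mul_add_atTop 2).frequently (.of_forall fun m => ?_)
  have hodd : ∀ k ∈ Finset.Ico (4 ^ (2 * m + 1)) (4 ^ (2 * m + 1 + 1)), ¬ IsBranchLevel k :=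
    fun k hk => by
      rw [IsBranchLevel, log_four_eq_of_mem_Ico hk, Nat.not_even_iff_odd]
      exact odd_two_mul_add_one m
  have h : (#{k ∈ Finset.range (4 ^ (2 * m + 2)) | IsBranchLevel k} : ℝ) ≤ 4 ^ (2 * m + 1) :=
    mod_cast card_filter_range_le_of_forall_Ico_not hodd
  have hpow : (4 : ℝ) ^ (2 * m + 2) = 4 * 4 ^ (2 * m + 1) := by ring
  push_cast
  linarith

theorem frequently_le_card_branchLevels :
    ∃ᶠ n in atTop, 3 / 4 * n ≤ (#{k ∈ Finset.range n | IsBranchLevel k} : ℝ) := by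
  refine (tendsto_four_pow_two_mul_add_atTop 1).frequently (.of_forall fun m => ?_)
  have heven : ∀ k ∈ Finset.Ico (4 ^ (2 * m)) (4 ^ (2 * m + 1)), IsBranchLevel k :=
    fun k hk => by
      rw [IsBranchLevel, log_four_eq_of_mem_Ico hk]
      exact even_two_mul m
  have hle : 4 ^ (2 * m) ≤ 4 ^ (2 * m + 1) := Nat.pow_le_pow_right (by norm_num) (by omega)
  have h : ((4 ^ (2 * m + 1) - 4 ^ (2 * m) : ℕ) : ℝ) ≤
      #{k ∈ Finset.range (4 ^ (2 * m + 1)) | IsBranchLevel k} :=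
    mod_cast le_card_filter_range_of_forall_Ico heven
  have hpow : (4 : ℝ) ^ (2 * m + 1) = 4 * 4 ^ (2 * m) := by ring
  rw [Nat.cast_sub hle] at h
  push_cast at h ⊢
  linarith

/-- **Example (no growth rate).** There exists an infinite directed graph `G` of bounded
geometry (every vertex has out-degree 1 or 2) with a root `i₀` whose directed cover `T`
satisfies `liminf |T_n|^(1/n) ≤ 2^(1/2)` and `2^(3/4) ≤ limsup |T_n|^(1/n)`; in particular
the growth rate of the directed cover of an infinite graph need not exist. -/
theorem exists_directedCover_growth_not_exists :
    ∃ (V : Type) (E : V → V → Prop) (i₀ : V), Countable V ∧ Infinite V ∧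
      (∀ i : V, {j | E i j}.Finite ∧ 1 ≤ {j | E i j}.ncard ∧ {j | E i j}.ncard ≤ 2) ∧
      Filter.liminf (fun n : ℕ =>
          (({x : Cover V E i₀ | Cover.ht x = n}.ncard : ℝ)) ^ ((n : ℝ)⁻¹)) Filter.atTop
        ≤ (2 : ℝ) ^ ((1 : ℝ) / 2) ∧
      (2 : ℝ) ^ ((3 : ℝ) / 4) ≤
        Filter.limsup (fun n : ℕ =>
          (({x : Cover V E i₀ | Cover.ht x = n}.ncard : ℝ)) ^ ((n : ℝ)⁻¹)) Filter.atTop := by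
  refine ⟨ℕ × Bool, branchingGraph IsBranchLevel, (0, false), inferInstance, inferInstance,
    branchingGraph_outdegree IsBranchLevel, ?_, ?_⟩ <;>
    simp only [ncard_branchingGraph_coverLevel]
  · exact (liminf_two_pow_rpow_inv_le frequently_card_branchLevels_le).trans
      (Real.rpow_le_rpow_of_exponent_le one_le_two (by norm_num))
  · exact le_limsup_two_pow_rpow_inv (fun n => (Finset.card_filter_le _ _).trans_eq (by simp))
      frequently_le_card_branchLevels
end

section
/- If λ⁺(M) < 1, then the random walk (X_n)_{n≥0} on the directed cover T is recurrent. -/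
open Filter Topology MeasureTheory Set
open scoped ENNReal NNReal Classical

/-!
For a vertex `x ≠ o` of the cover with label `i`, let `U(x)` be the probability that the walk
from `x` ever reaches the parent of `x`. The walk either steps to the parent at once, or steps to a
child `y`, comes back to `x` (probability `U(y)`), and then has to reach the parent from
`x` again; hence `U(x) ≥ p(-i) + Σ_j p(i,j) U(y_j) U(x)`. By induction the iterates
`F₀ = 0`, `F_{n+1}(i) = p(-i) + Σ_j p(i,j) F_n(j) F_n(i)` stay below `U` along labels, and they
increase to a fixed point `F ≤ 1`. Since `1 - F_j F_i ≤ (1 - F_j) + (1 - F_i)`, the bounded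
nonnegative function `1 - F` satisfies `M (1 - F) ≥ 1 - F`, so it vanishes when `λ⁺(M) < 1`.
Thus `U ≡ 1`, and the walk returns to the root with probability `p(-i₀) + Σ_j p(i₀,j) = 1`.
-/

section FirstPassage

variable {S : Type} (q : S → S → ℝ≥0∞)

/-- Total weight of the paths of length `n` from `x` that visit `w` for the first time at
time `n`. -/
noncomputable def firstHitWeight (w : S) : ℕ → S → ℝ≥0∞
  | 0 => fun x => if x = w then 1 else 0
  | n + 1 => fun x => if x = w then 0 else ∑' z, q x z * firstHitWeight w n z

noncomputable def hitProb (w x : S) : ℝ≥0∞ := ∑' n, firstHitWeight q w n x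

theorem firstHitWeight_self (w : S) (n : ℕ) :
    firstHitWeight q w n w = if n = 0 then 1 else 0 := by
  cases n <;> simp [firstHitWeight]

theorem firstHitWeight_zero_of_ne {w x : S} (hx : x ≠ w) : firstHitWeight q w 0 x = 0 :=
  if_neg hx

theorem firstHitWeight_succ_of_ne {w x : S} (hx : x ≠ w) (n : ℕ) :
    firstHitWeight q w (n + 1) x = ∑' z, q x z * firstHitWeight q w n z :=
  if_neg hx

theorem hitProb_self (w : S) : hitProb q w w = 1 := by
  simp [hitProb, firstHitWeight_self]

theorem hitProb_eq_tsum {w x : S} (hx : x ≠ w) :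
    hitProb q w x = ∑' z, q x z * hitProb q w z := by
  calc hitProb q w x = ∑' n, ∑' z, q x z * firstHitWeight q w n z := by
        rw [hitProb, tsum_eq_zero_add' ENNReal.summable, firstHitWeight_zero_of_ne q hx, zero_add]
        simp only [firstHitWeight_succ_of_ne q hx]
    _ = ∑' z, q x z * hitProb q w z := by
        rw [ENNReal.tsum_comm]
        simp only [hitProb, ENNReal.tsum_mul_left]

theorem sum_range_succ_firstHitWeight {w x : S} (hx : x ≠ w) (A : ℕ) :
    ∑ a ∈ Finset.range (A + 1), firstHitWeight q w a x
      = ∑' z, q x z * ∑ a ∈ Finset.range A, firstHitWeight q w a z := by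
  rw [Finset.sum_range_succ', firstHitWeight_zero_of_ne q hx, add_zero]
  simp only [firstHitWeight_succ_of_ne q hx, Finset.mul_sum]
  exact (Summable.tsum_finsetSum fun _ _ => ENNReal.summable).symm

/-- If the chain can leave `R` only from `v`, then from `R` it reaches `w ∉ R` only
through `v`. -/
theorem hitProb_mul_hitProb_le {v w : S} {R : Set S} (hw : w ∉ R)
    (hR : ∀ z ∈ R, z ≠ v → ∀ z', q z z' ≠ 0 → z' ∈ R) {u : S} (hu : u ∈ R) :
    hitProb q v u * hitProb q w v ≤ hitProb q w u := by
  suffices h : ∀ A, ∀ u ∈ R,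
      (∑ a ∈ Finset.range A, firstHitWeight q v a u) * hitProb q w v ≤ hitProb q w u by
    rw [hitProb, ENNReal.tsum_eq_iSup_nat, ENNReal.iSup_mul]
    exact iSup_le fun A => h A u hu
  intro A
  induction A with
  | zero => simp
  | succ A ih =>
    intro u hu
    by_cases huv : u = v
    · subst huv
      have h1 : ∑ a ∈ Finset.range (A + 1), firstHitWeight q u a u ≤ 1 := by
        simp [firstHitWeight_self]
      simpa using mul_le_mul_left h1 (hitProb q w u)
    · have huw : u ≠ w := fun h => hw (h ▸ hu)
      rw [sum_range_succ_firstHitWeight q huv, hitProb_eq_tsum q huw, ← ENNReal.tsum_mul_right]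
      refine ENNReal.tsum_le_tsum fun z => ?_
      by_cases hz : q u z = 0
      · simp [hz]
      · rw [mul_assoc]
        exact mul_le_mul_right (ih z (hR u hu huv z hz)) _

/-- Weight of the path `z, g 0, …, g (n - 1), w`. -/
noncomputable def pathWeight (w : S) : (n : ℕ) → S → (Fin n → S) → ℝ≥0∞
  | 0, z, _ => q z w
  | n + 1, z, g => q z (g 0) * pathWeight w n (g 0) (Fin.tail g)

theorem tsum_pathWeight (w : S) :
    ∀ (n : ℕ) (z : S), ∑' g : Fin n → {y // y ≠ w}, pathWeight q w n z (Subtype.val ∘ g)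
      = ∑' y, q z y * firstHitWeight q w n y
  | 0, z => by simp [pathWeight, firstHitWeight]
  | n + 1, z => by
    have hw0 : q z w * firstHitWeight q w (n + 1) w = 0 := by simp [firstHitWeight_self]
    calc ∑' g : Fin (n + 1) → {y // y ≠ w}, pathWeight q w (n + 1) z (Subtype.val ∘ g)
        = ∑' (y : {y // y ≠ w}) (g : Fin n → {y // y ≠ w}),
            q z y * pathWeight q w n y (Subtype.val ∘ g) := by
          rw [← (Fin.consEquiv fun _ => {y // y ≠ w}).tsum_eq, ENNReal.tsum_prod']
          rfl
      _ = ∑' y : {y // y ≠ w}, q z y * firstHitWeight q w (n + 1) y := by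
          refine tsum_congr fun y => ?_
          rw [ENNReal.tsum_mul_left, tsum_pathWeight w n, firstHitWeight_succ_of_ne q y.2]
      _ = ∑' y, q z y * firstHitWeight q w (n + 1) y :=
          tsum_subtype_eq_of_support_subset (s := {y | y ≠ w})
            (f := fun y => q z y * firstHitWeight q w (n + 1) y)
            fun y hy hyw => hy (by rw [hyw]; exact hw0)

end FirstPassage

section Excursion

variable {S : Type}

/-- The path `z, g 0, …, g (n - 1), o, o, …`. -/
def excursion (o : S) : (n : ℕ) → S → (Fin n → S) → ℕ → S
  | _, z, _, 0 => z
  | 0, _, _, _ + 1 => o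
  | n + 1, _, g, k + 1 => excursion o n (g 0) (Fin.tail g) k

theorem excursion_succ_self (o : S) :
    ∀ (n : ℕ) (z : S) (g : Fin n → S), excursion o n z g (n + 1) = o
  | 0, _, _ => rfl
  | n + 1, _, g => excursion_succ_self o n (g 0) (Fin.tail g)

theorem excursion_succ (o : S) :
    ∀ (n : ℕ) (z : S) (g : Fin n → S) (k : Fin n), excursion o n z g (k + 1) = g k
  | n + 1, _, g, k => by
    cases k using Fin.cases with
    | zero => simp [excursion]
    | succ k => exact excursion_succ o n (g 0) (Fin.tail g) k

theorem prod_excursion (q : S → S → ℝ≥0∞) (o : S) :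
    ∀ (n : ℕ) (z : S) (g : Fin n → S),
      ∏ k ∈ Finset.range (n + 1), q (excursion o n z g k) (excursion o n z g (k + 1))
        = pathWeight q o n z g
  | 0, _, _ => by simp [excursion, pathWeight]
  | n + 1, z, g => by
    rw [Finset.prod_range_succ', mul_comm]
    simp only [excursion]
    rw [prod_excursion q o n (g 0) (Fin.tail g)]
    rfl

end Excursion

section ReturnProbability

variable {S Ω : Type} {X : ℕ → Ω → S} {o : S}

def excursionEvent (X : ℕ → Ω → S) (o : S) (s : Σ n, Fin n → {y // y ≠ o}) : Set Ω :=
  {ω | ∀ k ≤ s.1 + 1, X k ω = excursion o s.1 o (Subtype.val ∘ s.2) k}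

theorem not_lt_of_mem_excursionEvent {ω : Ω} {n m : ℕ} {g : Fin n → {y // y ≠ o}}
    {h : Fin m → {y // y ≠ o}} (hg : ω ∈ excursionEvent X o ⟨n, g⟩)
    (hh : ω ∈ excursionEvent X o ⟨m, h⟩) : ¬ n < m := by
  intro hnm
  have h1 := hg (n + 1) le_rfl
  have h2 := hh ((⟨n, hnm⟩ : Fin m) + 1) (by simp; omega)
  rw [excursion_succ_self] at h1
  rw [excursion_succ] at h2
  exact (h ⟨n, hnm⟩).2 (h2.symm.trans h1)

theorem eq_of_mem_excursionEvent {ω : Ω} {s t : Σ n, Fin n → {y // y ≠ o}}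
    (hs : ω ∈ excursionEvent X o s) (ht : ω ∈ excursionEvent X o t) : s = t := by
  obtain ⟨n, g⟩ := s
  obtain ⟨m, h⟩ := t
  obtain rfl : n = m := le_antisymm (not_lt.mp (not_lt_of_mem_excursionEvent ht hs))
    (not_lt.mp (not_lt_of_mem_excursionEvent hs ht))
  congr
  funext k
  have hk := (hs (k + 1) (by dsimp only; omega)).symm.trans (ht (k + 1) (by dsimp only; omega))
  simp only [excursion_succ, Function.comp_apply] at hk
  exact Subtype.ext hk

variable [Countable S] [MeasurableSpace S] [MeasurableSpace Ω] [MeasurableSingletonClass S]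

theorem tsum_mul_hitProb_le_measure_return {P : Measure Ω} (q : S → S → ℝ≥0∞)
    (hX : ∀ n, Measurable (X n))
    (hP : ∀ (n : ℕ) (path : ℕ → S), P {ω | ∀ k ≤ n, X k ω = path k} =
      (if path 0 = o then 1 else 0) * ∏ k ∈ Finset.range n, q (path k) (path (k + 1))) :
    ∑' y, q o y * hitProb q o y ≤ P {ω | ∃ n, 1 ≤ n ∧ X n ω = o} := by
  have hmeas : ∀ s, MeasurableSet (excursionEvent X o s) := fun s => by
    simp only [excursionEvent, Set.setOf_forall]
    exact .iInter fun k => .iInter fun _ => hX k (measurableSet_singleton _)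
  have hdisj : Pairwise (Function.onFun Disjoint (excursionEvent X o)) := fun s t hst =>
    Set.disjoint_left.mpr fun _ hs ht => hst (eq_of_mem_excursionEvent hs ht)
  have hsub : ⋃ s, excursionEvent X o s ⊆ {ω | ∃ n, 1 ≤ n ∧ X n ω = o} := by
    rintro ω ⟨_, ⟨s, rfl⟩, hs⟩
    exact ⟨s.1 + 1, by omega, (hs _ le_rfl).trans (excursion_succ_self _ _ _ _)⟩
  calc ∑' y, q o y * hitProb q o y
      = ∑' (n : ℕ) (g : Fin n → {y // y ≠ o}), pathWeight q o n o (Subtype.val ∘ g) := by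
        simp only [tsum_pathWeight, hitProb, ← ENNReal.tsum_mul_left]
        exact ENNReal.tsum_comm
    _ = ∑' s, P (excursionEvent X o s) := by
        rw [← ENNReal.tsum_sigma]
        refine tsum_congr fun s => ?_
        rw [excursionEvent, hP, excursion.eq_1, if_pos rfl, one_mul, prod_excursion]
    _ = P (⋃ s, excursionEvent X o s) := (measure_iUnion hdisj hmeas).symm
    _ ≤ P {ω | ∃ n, 1 ≤ n ∧ X n ω = o} := measure_mono hsub

end ReturnProbability

theorem List.isChain_cons_append_singleton_iff {α : Type*} {R : α → α → Prop} {a j : α}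
    {l : List α} :
    List.IsChain R (a :: (l ++ [j])) ↔ List.IsChain R (a :: l) ∧ R (l.getLastD a) j := by
  rw [← List.cons_append, List.isChain_append]
  simp [List.getLast?_cons, List.getLastD_eq_getLast?]

namespace Cover

variable {V : Type} {E : V → V → Prop} {i₀ : V}

instance [Countable V] : Countable (Cover V E i₀) :=
  inferInstanceAs (Countable {l : List V // List.IsChain E (i₀ :: l)})

instance : MeasurableSingletonClass (Cover V E i₀) :=
  ⟨fun _ => MeasurableSpace.measurableSet_top⟩

def parent (x : Cover V E i₀) : Cover V E i₀ :=
  ⟨x.val.dropLast,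
    List.IsChain.prefix x.2 (List.cons_prefix_cons.mpr ⟨rfl, List.dropLast_prefix _⟩)⟩

def child (x : Cover V E i₀) (j : V) (h : E x.lbl j) : Cover V E i₀ :=
  ⟨x.val ++ [j], List.isChain_cons_append_singleton_iff.mpr ⟨x.2, h⟩⟩

theorem val_parent (x : Cover V E i₀) : x.parent.val = x.val.dropLast := rfl

theorem parent_root : (root : Cover V E i₀).parent = root := rfl

theorem parent_child {x : Cover V E i₀} {j : V} (h : E x.lbl j) : (x.child j h).parent = x :=
  Subtype.ext List.dropLast_concat

theorem lbl_child {x : Cover V E i₀} {j : V} (h : E x.lbl j) : (x.child j h).lbl = j :=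
  List.getLastD_concat

theorem child_ne_root {x : Cover V E i₀} {j : V} (h : E x.lbl j) : x.child j h ≠ root := by
  intro hc
  simpa [child, root] using congrArg Subtype.val hc

theorem parent_of_isChildOf {x y : Cover V E i₀} (h : IsChildOf y x) : y.parent = x := by
  obtain ⟨j, hj⟩ := h
  exact Subtype.ext (by rw [val_parent, hj, List.dropLast_concat])

theorem isChildOf_parent {x : Cover V E i₀} (hx : x ≠ root) : IsChildOf x x.parent := by
  have hne : x.val ≠ [] := fun h => hx (Subtype.ext h)
  exact ⟨x.val.getLast hne, (List.dropLast_append_getLast hne).symm⟩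

theorem eq_child_of_isChildOf {x y : Cover V E i₀} (h : IsChildOf y x) :
    ∃ hj : E x.lbl y.lbl, x.child y.lbl hj = y := by
  obtain ⟨j, hj⟩ := h
  have hy : List.IsChain E (i₀ :: (x.val ++ [j])) := hj ▸ y.2
  rw [List.isChain_cons_append_singleton_iff] at hy
  have hlbl : y.lbl = j := by rw [lbl, hj, List.getLastD_concat]
  rw [hlbl]
  exact ⟨hy.2, Subtype.ext hj.symm⟩

theorem length_parent (x : Cover V E i₀) : x.parent.val.length = x.val.length - 1 :=
  List.length_dropLast

theorem parent_ne_self {x : Cover V E i₀} (hx : x ≠ root) : x.parent ≠ x := by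
  intro h
  have hlen := congrArg (fun y : Cover V E i₀ => y.val.length) h
  have hpos : 0 < x.val.length := List.length_pos_iff.mpr fun h => hx (Subtype.ext h)
  simp only [length_parent] at hlen
  omega

theorem child_ne_parent {x : Cover V E i₀} {j : V} (h : E x.lbl j) :
    x.child j h ≠ x.parent := by
  intro hc
  have := congrArg (fun y : Cover V E i₀ => y.val.length) hc
  simp only [child, length_parent, List.length_append, List.length_singleton] at this
  omega

def subtree (y : Cover V E i₀) : Set (Cover V E i₀) := {z | y.val <+: z.val}

theorem mem_subtree_self (y : Cover V E i₀) : y ∈ subtree y := List.prefix_refl _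

theorem parent_mem_subtree {y z : Cover V E i₀} (hz : z ∈ subtree y) (hzy : z ≠ y) :
    z.parent ∈ subtree y := by
  by_cases hroot : z = root
  · rwa [hroot, parent_root, ← hroot]
  obtain ⟨a, ha⟩ := isChildOf_parent hroot
  have hpre : y.val <+: z.parent.val ++ [a] := ha ▸ hz
  rcases List.prefix_concat_iff.mp hpre with h | h
  · exact absurd (Subtype.ext (h.trans ha.symm)).symm hzy
  · exact h

theorem subtree_mono_of_isChildOf {y z z' : Cover V E i₀} (hz : z ∈ subtree y)
    (h : IsChildOf z' z) : z' ∈ subtree y := by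
  obtain ⟨j, hj⟩ := h
  exact hz.trans (hj ▸ List.prefix_append _ _)

end Cover

section CoverWalk

open Cover

variable {V : Type} {E : V → V → Prop} {i₀ : V} (pf : V → V → ℝ) (pm : V → ℝ)

theorem eq_parent_or_isChildOf_of_coverP_ne_zero {x z : Cover V E i₀}
    (h : coverP E i₀ pf pm x z ≠ 0) : z = x.parent ∨ IsChildOf z x := by
  unfold coverP at h
  split_ifs at h with h1 h2 h3
  · exact Or.inr h1
  · exact Or.inl (Subtype.ext (by rw [h2.2, val_parent, h2.1]; rfl))
  · exact Or.inl (parent_of_isChildOf h3).symm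
  · exact absurd rfl h

theorem coverP_parent (x : Cover V E i₀) : coverP E i₀ pf pm x x.parent = pm x.lbl := by
  have hnot : ¬ IsChildOf x.parent x := by
    rintro ⟨j, hj⟩
    have := congrArg List.length hj
    simp [val_parent] at this
  rw [coverP, if_neg hnot]
  by_cases hx : x = root
  · subst hx
    rw [if_pos ⟨rfl, rfl⟩]
    rfl
  · rw [if_neg (fun h => hx (Subtype.ext h.1)), if_pos (isChildOf_parent hx)]

theorem coverP_child {x : Cover V E i₀} {j : V} (h : E x.lbl j) :
    coverP E i₀ pf pm x (x.child j h) = pf x.lbl j := by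
  rw [coverP, if_pos ⟨j, rfl⟩, lbl_child]

noncomputable def coverKernel (x y : Cover V E i₀) : ℝ≥0∞ :=
  ENNReal.ofReal (coverP E i₀ pf pm x y)

theorem tsum_coverKernel_mul (x : Cover V E i₀) (f : Cover V E i₀ → ℝ≥0∞) :
    ∑' z, coverKernel pf pm x z * f z
      = ENNReal.ofReal (pm x.lbl) * f x.parent
        + ∑' j : {j // E x.lbl j}, ENNReal.ofReal (pf x.lbl j) * f (x.child j j.2) := by
  rw [ENNReal.tsum_eq_add_tsum_ite x.parent, coverKernel, coverP_parent]
  congr 1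
  have hinj : Function.Injective fun j : {j // E x.lbl j} => x.child j j.2 :=
    fun j j' h => Subtype.ext (by simpa only [lbl_child] using congrArg lbl h)
  rw [← hinj.tsum_eq]
  · refine tsum_congr fun j => ?_
    rw [if_neg (child_ne_parent j.2), coverKernel, coverP_child]
  · intro z hz
    have hzp : z ≠ x.parent := fun h => hz (if_pos h)
    have hq : coverP E i₀ pf pm x z ≠ 0 := fun h => hz (by simp [hzp, coverKernel, h])
    obtain ⟨hj, hzj⟩ := eq_child_of_isChildOf
      ((eq_parent_or_isChildOf_of_coverP_ne_zero pf pm hq).resolve_left hzp)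
    exact ⟨⟨z.lbl, hj⟩, hzj⟩

theorem mem_insert_subtree_of_coverKernel_ne_zero {x : Cover V E i₀} {j : V} (h : E x.lbl j)
    {z : Cover V E i₀} (hz : z ∈ insert x (subtree (x.child j h))) (hzx : z ≠ x)
    {z' : Cover V E i₀} (hq : coverKernel pf pm z z' ≠ 0) :
    z' ∈ insert x (subtree (x.child j h)) := by
  have hz : z ∈ subtree (x.child j h) := hz.resolve_left hzx
  have hq : coverP E i₀ pf pm z z' ≠ 0 := fun h0 =>
    hq (by rw [coverKernel, h0, ENNReal.ofReal_zero])
  rcases eq_parent_or_isChildOf_of_coverP_ne_zero pf pm hq with rfl | hchild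
  · by_cases hzy : z = x.child j h
    · exact Or.inl (by rw [hzy, parent_child])
    · exact Or.inr (parent_mem_subtree hz hzy)
  · exact Or.inr (subtree_mono_of_isChildOf hz hchild)

theorem parent_notMem_insert_subtree {x : Cover V E i₀} (hx : x ≠ root) {j : V}
    (h : E x.lbl j) :
    x.parent ∉ insert x (subtree (x.child j h)) := by
  rintro (hpx | hsub)
  · exact parent_ne_self hx hpx
  · have := hsub.length_le
    simp only [child, length_parent, List.length_append, List.length_singleton] at this
    omega

noncomputable def hitParentProb (x : Cover V E i₀) : ℝ≥0∞ :=
  hitProb (coverKernel pf pm) x.parent x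

theorem hitParentProb_child {x : Cover V E i₀} {j : V} (h : E x.lbl j) :
    hitParentProb pf pm (x.child j h) = hitProb (coverKernel pf pm) x (x.child j h) := by
  rw [hitParentProb, parent_child]

/-- To reach its grandparent, the walk from a child of `x` has to pass through `x`. -/
theorem hitParentProb_ge {x : Cover V E i₀} (hx : x ≠ root) :
    ENNReal.ofReal (pm x.lbl) + ∑' j : {j // E x.lbl j},
        ENNReal.ofReal (pf x.lbl j) * (hitParentProb pf pm (x.child j j.2) * hitParentProb pf pm x)
      ≤ hitParentProb pf pm x := by
  calc _ ≤ ENNReal.ofReal (pm x.lbl) * 1 + ∑' j : {j // E x.lbl j},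
          ENNReal.ofReal (pf x.lbl j) * hitProb (coverKernel pf pm) x.parent (x.child j j.2) := by
        rw [mul_one]
        refine add_le_add_right (ENNReal.tsum_le_tsum fun j => mul_le_mul_right ?_ _) _
        rw [hitParentProb_child]
        exact hitProb_mul_hitProb_le _ (parent_notMem_insert_subtree hx j.2)
          (fun z hz hzx z' => mem_insert_subtree_of_coverKernel_ne_zero pf pm j.2 hz hzx)
          (Set.mem_insert_of_mem _ (mem_subtree_self _))
    _ = hitParentProb pf pm x := by
        rw [hitParentProb, hitProb_eq_tsum _ (parent_ne_self hx).symm, tsum_coverKernel_mul,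
          hitProb_self]

end CoverWalk

section CollatzWielandt

variable {V : Type}

def collatzWielandtSet (M : V → V → ℝ) : Set ℝ :=
  {lam : ℝ | 0 < lam ∧ ∃ f : V → ℝ, (∀ i, 0 ≤ f i) ∧ f ≠ 0 ∧
    BddAbove (Set.range f) ∧ ∀ i, lam * f i ≤ ∑' j : V, M i j * f j}

theorem bddAbove_collatzWielandtSet {M : V → V → ℝ} {C : ℝ} (hM0 : ∀ i j, 0 ≤ M i j)
    (hM : ∀ i, Summable (M i)) (hC : ∀ i, ∑' j, M i j ≤ C) :
    BddAbove (collatzWielandtSet M) := by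
  refine ⟨C, ?_⟩
  rintro lam ⟨hlam, f, hf0, hf, hfb, hMf⟩
  by_contra! hClam
  set B := sSup (Set.range f)
  have hfB : ∀ i, f i ≤ B := fun i => le_csSup hfb (Set.mem_range_self i)
  obtain ⟨i₁, hi₁⟩ := Function.ne_iff.mp hf
  have hB : 0 < B := (lt_of_le_of_ne (hf0 i₁) (Ne.symm hi₁)).trans_le (hfB i₁)
  obtain ⟨_, ⟨i, rfl⟩, hi⟩ :=
    exists_lt_of_lt_csSup (s := Set.range f) ⟨f i₁, i₁, rfl⟩
    (show C * B / lam < B by rw [div_lt_iff₀ hlam]; nlinarith)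
  have hsum : ∑' j, M i j * f j ≤ C * B := calc
    ∑' j, M i j * f j ≤ ∑' j, M i j * B :=
        Summable.tsum_le_tsum (fun j => mul_le_mul_of_nonneg_left (hfB j) (hM0 i j))
          (Summable.of_nonneg_of_le (fun j => mul_nonneg (hM0 i j) (hf0 j))
            (fun j => mul_le_mul_of_nonneg_left (hfB j) (hM0 i j)) ((hM i).mul_right B))
          ((hM i).mul_right B)
    _ = (∑' j, M i j) * B := tsum_mul_right
    _ ≤ C * B := mul_le_mul_of_nonneg_right (hC i) hB.le
  rw [div_lt_iff₀ hlam] at hi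
  linarith [hMf i]

theorem one_le_lambdaPlus {M : V → V → ℝ} (hbdd : BddAbove (collatzWielandtSet M))
    {g : V → ℝ} (hg0 : ∀ i, 0 ≤ g i) (hg : g ≠ 0) (hgb : BddAbove (Set.range g))
    (hMg : ∀ i, g i ≤ ∑' j, M i j * g j) : 1 ≤ lambdaPlus M :=
  le_csSup hbdd ⟨one_pos, g, hg0, hg, hgb, fun i => by rw [one_mul]; exact hMg i⟩

end CollatzWielandt

section HitRecursion

variable {V : Type} (a : V → V → ℝ) (b : V → ℝ)

noncomputable def hitStep (c : V → ℝ) (i : V) : ℝ := b i + ∑' j, a i j * (c j * c i)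

noncomputable def hitApprox (n : ℕ) : V → ℝ := (hitStep a b)^[n] 0

theorem hitApprox_succ (n : ℕ) : hitApprox a b (n + 1) = hitStep a b (hitApprox a b n) :=
  Function.iterate_succ_apply' _ _ _

variable {a b}

theorem summable_mul_of_mem_Icc {f c : V → ℝ} (hf0 : ∀ j, 0 ≤ f j) (hf : Summable f)
    (hc : ∀ j, c j ∈ Icc (0 : ℝ) 1) : Summable fun j => f j * c j :=
  Summable.of_nonneg_of_le (fun j => mul_nonneg (hf0 j) (hc j).1)
    (fun j => mul_le_of_le_one_right (hf0 j) (hc j).2) hf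

theorem hitStep_mem_Icc (ha0 : ∀ i j, 0 ≤ a i j) (ha : ∀ i, HasSum (a i) (1 - b i))
    (hb0 : ∀ i, 0 ≤ b i) {c : V → ℝ} (hc : ∀ j, c j ∈ Icc (0 : ℝ) 1) (i : V) :
    hitStep a b c i ∈ Icc (0 : ℝ) 1 := by
  have hcc : ∀ j, c j * c i ∈ Icc (0 : ℝ) 1 := fun j => unitInterval.mul_mem (hc j) (hc i)
  have hle : ∑' j, a i j * (c j * c i) ≤ 1 - b i :=
    hasSum_le (fun j => mul_le_of_le_one_right (ha0 i j) (hcc j).2)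
      (summable_mul_of_mem_Icc (ha0 i) (ha i).summable hcc).hasSum (ha i)
  refine ⟨add_nonneg (hb0 i) (tsum_nonneg fun j => mul_nonneg (ha0 i j) (hcc j).1), ?_⟩
  rw [hitStep]
  linarith

theorem hitStep_mono (ha0 : ∀ i j, 0 ≤ a i j) (ha : ∀ i, HasSum (a i) (1 - b i))
    {c d : V → ℝ} (hc : ∀ j, c j ∈ Icc (0 : ℝ) 1) (hd : ∀ j, d j ∈ Icc (0 : ℝ) 1)
    (hcd : ∀ j, c j ≤ d j) (i : V) : hitStep a b c i ≤ hitStep a b d i :=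
  add_le_add_right (Summable.tsum_le_tsum
    (fun j => mul_le_mul_of_nonneg_left (mul_le_mul (hcd j) (hcd i) (hc i).1 (hd j).1) (ha0 i j))
    (summable_mul_of_mem_Icc (ha0 i) (ha i).summable fun j => unitInterval.mul_mem (hc j) (hc i))
    (summable_mul_of_mem_Icc (ha0 i) (ha i).summable fun j => unitInterval.mul_mem (hd j) (hd i)))
    _

theorem tendsto_hitStep (ha0 : ∀ i j, 0 ≤ a i j) (ha : ∀ i, HasSum (a i) (1 - b i))
    {c : ℕ → V → ℝ} {d : V → ℝ} (hc : ∀ n j, c n j ∈ Icc (0 : ℝ) 1)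
    (hcd : ∀ j, Tendsto (fun n => c n j) atTop (𝓝 (d j))) (i : V) :
    Tendsto (fun n => hitStep a b (c n) i) atTop (𝓝 (hitStep a b d i)) := by
  refine tendsto_const_nhds.add (tendsto_tsum_of_dominated_convergence (ha i).summable
    (fun j => ((hcd j).mul (hcd i)).const_mul _) (Eventually.of_forall fun n j => ?_))
  have hcc := unitInterval.mul_mem (hc n j) (hc n i)
  rw [Real.norm_of_nonneg (mul_nonneg (ha0 i j) hcc.1)]
  exact mul_le_of_le_one_right (ha0 i j) hcc.2

theorem hitApprox_mem_Icc (ha0 : ∀ i j, 0 ≤ a i j) (ha : ∀ i, HasSum (a i) (1 - b i))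
    (hb0 : ∀ i, 0 ≤ b i) : ∀ n i, hitApprox a b n i ∈ Icc (0 : ℝ) 1
  | 0, _ => ⟨le_rfl, zero_le_one⟩
  | n + 1, i => by
    rw [hitApprox_succ]
    exact hitStep_mem_Icc ha0 ha hb0 (hitApprox_mem_Icc ha0 ha hb0 n) i

theorem hitApprox_le_succ (ha0 : ∀ i j, 0 ≤ a i j) (ha : ∀ i, HasSum (a i) (1 - b i))
    (hb0 : ∀ i, 0 ≤ b i) : ∀ n i, hitApprox a b n i ≤ hitApprox a b (n + 1) i
  | 0, i => (hitApprox_mem_Icc ha0 ha hb0 1 i).1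
  | n + 1, i => by
    rw [hitApprox_succ, hitApprox_succ _ _ (n + 1)]
    exact hitStep_mono ha0 ha (hitApprox_mem_Icc ha0 ha hb0 n)
      (hitApprox_mem_Icc ha0 ha hb0 (n + 1)) (hitApprox_le_succ ha0 ha hb0 n) i

theorem exists_tendsto_hitApprox_fixedPoint (ha0 : ∀ i j, 0 ≤ a i j)
    (ha : ∀ i, HasSum (a i) (1 - b i)) (hb0 : ∀ i, 0 ≤ b i) :
    ∃ F : V → ℝ, (∀ i, F i ∈ Icc (0 : ℝ) 1) ∧ hitStep a b F = F ∧
      ∀ i, Tendsto (fun n => hitApprox a b n i) atTop (𝓝 (F i)) := by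
  have hIcc := hitApprox_mem_Icc ha0 ha hb0
  have htend :
      ∀ i, Tendsto (fun n => hitApprox a b n i) atTop (𝓝 (⨆ n, hitApprox a b n i)) :=
    fun i => tendsto_atTop_ciSup (monotone_nat_of_le_succ (hitApprox_le_succ ha0 ha hb0 · i))
      ⟨1, by rintro _ ⟨n, rfl⟩; exact (hIcc n i).2⟩
  refine ⟨_, fun i => isClosed_Icc.mem_of_tendsto (htend i) (Eventually.of_forall (hIcc · i)),
    funext fun i => ?_, htend⟩
  have hsucc := (htend i).comp (tendsto_add_atTop_nat 1)
  simp only [Function.comp_def, hitApprox_succ] at hsucc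
  exact tendsto_nhds_unique (tendsto_hitStep ha0 ha hIcc htend i) hsucc

/-- `1 - F` is superharmonic since `1 - F j F i ≤ (1 - F j) + (1 - F i)`. -/
theorem mul_one_sub_le_tsum_of_hitStep_eq (ha0 : ∀ i j, 0 ≤ a i j)
    (ha : ∀ i, HasSum (a i) (1 - b i)) {F : V → ℝ} (hF : ∀ i, F i ∈ Icc (0 : ℝ) 1)
    (hfix : hitStep a b F = F) (i : V) : b i * (1 - F i) ≤ ∑' j, a i j * (1 - F j) := by
  have hFF := summable_mul_of_mem_Icc (ha0 i) (ha i).summable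
    fun j => unitInterval.mul_mem (hF j) (hF i)
  have h1F := summable_mul_of_mem_Icc (ha0 i) (ha i).summable (c := fun j => 1 - F j)
    fun j => Icc.mem_iff_one_sub_mem.mp (hF j)
  have hlhs : HasSum (fun j => a i j * (1 - F j * F i)) (1 - F i) := by
    have hFi : hitStep a b F i = F i := congrFun hfix i
    rw [hitStep] at hFi
    have h := (ha i).sub hFF.hasSum
    rw [show 1 - b i - ∑' j, a i j * (F j * F i) = 1 - F i by linarith] at h
    simpa only [mul_sub, mul_one] using h
  have hle := hasSum_le (fun j => ?_) hlhs (h1F.hasSum.add ((ha i).mul_right (1 - F i)))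
  · linarith
  · nlinarith [mul_nonneg (ha0 i j) (mul_nonneg (sub_nonneg.2 (hF j).2) (sub_nonneg.2 (hF i).2))]

theorem tendsto_hitApprox_one (ha0 : ∀ i j, 0 ≤ a i j) (ha : ∀ i, HasSum (a i) (1 - b i))
    {ε : ℝ} (hε : 0 < ε) (hb : ∀ i, ε ≤ b i)
    (hlam : lambdaPlus (fun i j => a i j / b i) < 1) (i : V) :
    Tendsto (fun n => hitApprox a b n i) atTop (𝓝 1) := by
  have hb0 : ∀ i, 0 < b i := fun i => hε.trans_le (hb i)
  obtain ⟨F, hF, hfix, htend⟩ := exists_tendsto_hitApprox_fixedPoint ha0 ha fun i => (hb0 i).le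
  suffices hF1 : F = 1 by simpa [hF1] using htend i
  by_contra hF1
  have hbdd : BddAbove (collatzWielandtSet fun i j => a i j / b i) := by
    refine bddAbove_collatzWielandtSet (C := 1 / ε)
      (fun i j => div_nonneg (ha0 i j) (hb0 i).le) (fun i => (ha i).summable.div_const _)
      fun i => ?_
    rw [tsum_div_const, (ha i).tsum_eq]
    calc (1 - b i) / b i ≤ 1 / b i := div_le_div_of_nonneg_right (by linarith [hb0 i]) (hb0 i).le
      _ ≤ 1 / ε := one_div_le_one_div_of_le hε (hb i)
  refine hlam.not_ge (one_le_lambdaPlus hbdd (g := fun i => 1 - F i)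
    (fun i => sub_nonneg.2 (hF i).2) (fun h => hF1 (funext fun i => ?_))
    ⟨1, by rintro _ ⟨i, rfl⟩; exact sub_le_self _ (hF i).1⟩ fun i => ?_)
  · have := congrFun h i
    simp only [Pi.zero_apply, Pi.one_apply] at this ⊢
    linarith
  · simp only [div_mul_eq_mul_div, tsum_div_const]
    rw [le_div_iff₀ (hb0 i), mul_comm]
    exact mul_one_sub_le_tsum_of_hitStep_eq ha0 ha hF hfix i

end HitRecursion

section Recurrence

open Cover

variable {V : Type} {E : V → V → Prop} {i₀ : V} {pf : V → V → ℝ} {pm : V → ℝ}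

theorem ofReal_tsum_eq_tsum_subtype {f : V → ℝ} {p : V → Prop} (hf0 : ∀ j, 0 ≤ f j)
    (hf : Summable f) (hp : ∀ j, ¬ p j → f j = 0) :
    ENNReal.ofReal (∑' j, f j) = ∑' j : {j // p j}, ENNReal.ofReal (f j) := by
  rw [ENNReal.ofReal_tsum_of_nonneg hf0 hf]
  refine (tsum_subtype_eq_of_support_subset (s := {j | p j}) (f := fun j => ENNReal.ofReal (f j))
    fun j hj => ?_).symm
  by_contra hpj
  exact hj (by simp [hp j hpj])

theorem ofReal_hitApprox_le_hitParentProb (ha0 : ∀ i j, 0 ≤ pf i j)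
    (ha : ∀ i, HasSum (pf i) (1 - pm i)) (hb0 : ∀ i, 0 ≤ pm i)
    (hE : ∀ i j, ¬ E i j → pf i j = 0) :
    ∀ (n : ℕ) (x : Cover V E i₀), x ≠ root →
      ENNReal.ofReal (hitApprox pf pm n x.lbl) ≤ hitParentProb pf pm x
  | 0, x, _ => by simp [hitApprox]
  | n + 1, x, hx => by
    have hIcc := hitApprox_mem_Icc ha0 ha hb0 n
    have ih := ofReal_hitApprox_le_hitParentProb ha0 ha hb0 hE n
    have hcc : ∀ j, hitApprox pf pm n j * hitApprox pf pm n x.lbl ∈ Icc (0 : ℝ) 1 :=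
      fun j => unitInterval.mul_mem (hIcc j) (hIcc x.lbl)
    rw [hitApprox_succ, hitStep, ENNReal.ofReal_add (hb0 _)
      (tsum_nonneg fun j => mul_nonneg (ha0 _ j) (hcc j).1),
      ofReal_tsum_eq_tsum_subtype (p := E x.lbl) (fun j => mul_nonneg (ha0 _ j) (hcc j).1)
        (summable_mul_of_mem_Icc (ha0 _) (ha _).summable hcc)
        fun j hj => by rw [hE _ j hj, zero_mul]]
    refine le_trans (add_le_add_right (ENNReal.tsum_le_tsum fun j => ?_) _)
      (hitParentProb_ge pf pm hx)
    rw [ENNReal.ofReal_mul (ha0 _ _), ENNReal.ofReal_mul (hIcc _).1]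
    gcongr
    · simpa only [lbl_child] using ih (x.child j j.2) (child_ne_root j.2)
    · exact ih x hx

theorem one_le_hitParentProb (ha0 : ∀ i j, 0 ≤ pf i j) (ha : ∀ i, HasSum (pf i) (1 - pm i))
    {ε : ℝ} (hε : 0 < ε) (hb : ∀ i, ε ≤ pm i) (hE : ∀ i j, ¬ E i j → pf i j = 0)
    (hlam : lambdaPlus (fun i j => pf i j / pm i) < 1) {x : Cover V E i₀} (hx : x ≠ root) :
    1 ≤ hitParentProb pf pm x := by
  have hlim := ENNReal.tendsto_ofReal (tendsto_hitApprox_one ha0 ha hε hb hlam x.lbl)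
  rw [ENNReal.ofReal_one] at hlim
  exact le_of_tendsto' hlim fun n =>
    ofReal_hitApprox_le_hitParentProb ha0 ha (fun i => hε.le.trans (hb i)) hE n x hx

theorem one_le_tsum_coverKernel_mul_hitProb_root (ha0 : ∀ i j, 0 ≤ pf i j)
    (ha : ∀ i, HasSum (pf i) (1 - pm i)) (hb0 : ∀ i, 0 ≤ pm i)
    (hE : ∀ i j, ¬ E i j → pf i j = 0)
    (hU : ∀ x : Cover V E i₀, x ≠ root → 1 ≤ hitParentProb pf pm x) :
    1 ≤ ∑' y, coverKernel pf pm (root : Cover V E i₀) y *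
      hitProb (coverKernel pf pm) root y := by
  rw [tsum_coverKernel_mul, parent_root, hitProb_self, mul_one]
  calc (1 : ℝ≥0∞) = ENNReal.ofReal (pm i₀) + ENNReal.ofReal (∑' j, pf i₀ j) := by
        rw [(ha i₀).tsum_eq, ← ENNReal.ofReal_add (hb0 _) ((ha i₀).nonneg (ha0 i₀)),
          add_sub_cancel, ENNReal.ofReal_one]
    _ = ENNReal.ofReal (pm i₀) + ∑' j : {j // E i₀ j}, ENNReal.ofReal (pf i₀ j) * 1 := by
        rw [ofReal_tsum_eq_tsum_subtype (ha0 i₀) (ha i₀).summable (hE i₀)]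
        simp only [mul_one]
    _ ≤ _ := add_le_add_right (ENNReal.tsum_le_tsum fun j => mul_le_mul_right
        ((hitParentProb_child pf pm (x := root) j.2) ▸ hU _ (child_ne_root j.2)) _) _

end Recurrence

theorem recurrent_of_lambdaPlus_lt_one_general
    {V : Type} [Countable V] (E : V → V → Prop) (i₀ : V)
    (pG : V → V → ℝ) (hpG0 : ∀ i j, 0 ≤ pG i j) (hpGpos : ∀ i j, 0 < pG i j ↔ E i j)
    (hpGsum : ∀ i, ∑' j : V, pG i j = 1)
    (pm : V → ℝ) (ε : ℝ) (hε0 : 0 < ε)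
    (hpm : ∀ i, ε < pm i ∧ pm i < 1 - ε)
    (hlam : lambdaPlus (fun i j => (1 - pm i) * pG i j / pm i) < 1) :
    ∀ (Ω : Type) (mΩ : MeasurableSpace Ω) (P : Measure Ω), IsProbabilityMeasure P →
      ∀ X : ℕ → Ω → Cover V E i₀,
        IsCoverWalk E i₀ (fun i j => (1 - pm i) * pG i j) pm P X →
        P {ω | ∃ n : ℕ, 1 ≤ n ∧ X n ω = Cover.root} = 1 := by
  intro Ω _ P _ X hX
  set pf : V → V → ℝ := fun i j => (1 - pm i) * pG i j
  have hpm0 : ∀ i, 0 ≤ pm i := fun i => (hε0.trans (hpm i).1).le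
  have ha0 : ∀ i j, 0 ≤ pf i j := fun i j => mul_nonneg (by linarith [(hpm i).2]) (hpG0 i j)
  have ha : ∀ i, HasSum (pf i) (1 - pm i) := fun i => by
    have hs : Summable (pG i) := by
      by_contra h
      simpa [tsum_eq_zero_of_not_summable h] using hpGsum i
    simpa [hpGsum i] using hs.hasSum.mul_left (1 - pm i)
  have hE : ∀ i j, ¬ E i j → pf i j = 0 := fun i j hij => by
    simp [pf, le_antisymm (not_lt.mp (mt (hpGpos i j).mp hij)) (hpG0 i j)]
  have hU : ∀ x : Cover V E i₀, x ≠ Cover.root → 1 ≤ hitParentProb pf pm x :=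
    fun x hx => one_le_hitParentProb ha0 ha hε0 (fun i => (hpm i).1.le) hE hlam hx
  exact le_antisymm prob_le_one ((one_le_tsum_coverKernel_mul_hitProb_root ha0 ha hpm0 hE hU).trans
    (tsum_mul_hitProb_le_measure_return _ hX.1 hX.2))

/-- **Theorem 2 (part).** If the upper Collatz–Wielandt number of the matrix
`M = (p(i,j)/p(-i))` satisfies `λ⁺(M) < 1`, then the nearest-neighbour random walk
on the directed cover `T` is recurrent (returns to the root with probability 1). -/
theorem recurrent_of_lambdaPlus_lt_one
    {V : Type} [Countable V] (E : V → V → Prop) (i₀ : V)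
    (hconn : ∀ i j : V, Relation.ReflTransGen E i j)
    (hout : ∀ i : V, {j | E i j}.Finite) (hin : ∀ i : V, {j | E j i}.Finite)
    (D : ℕ) (hD : ∀ i : V, {j | E i j}.ncard ≤ D ∧ {j | E j i}.ncard ≤ D)
    (pG : V → V → ℝ) (hpG0 : ∀ i j, 0 ≤ pG i j) (hpGpos : ∀ i j, 0 < pG i j ↔ E i j)
    (hpGsum : ∀ i, ∑' j : V, pG i j = 1)
    (pm : V → ℝ) (ε : ℝ) (hε0 : 0 < ε) (hε1 : ε < 1)
    (hpm : ∀ i, ε < pm i ∧ pm i < 1 - ε)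
    (hlam : lambdaPlus (fun i j => (1 - pm i) * pG i j / pm i) < 1) :
    ∀ (Ω : Type) (mΩ : MeasurableSpace Ω) (P : Measure Ω), IsProbabilityMeasure P →
      ∀ X : ℕ → Ω → Cover V E i₀,
        IsCoverWalk E i₀ (fun i j => (1 - pm i) * pG i j) pm P X →
        P {ω | ∃ n : ℕ, 1 ≤ n ∧ X n ω = Cover.root} = 1 :=
  recurrent_of_lambdaPlus_lt_one_general E i₀ pG hpG0 hpGpos hpGsum pm ε hε0 hpm hlam
end
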